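/- arXiv:2302.07208 — 7 statements merged into one kernel-verified Lean document; each statement's English description precedes it below -/
import Mathlib

section
/- Let m > 0 be a real number and J an invertible real 3×3 matrix. Then there exist positive constants Δ_B̄ and Δ_B̄inv such that for every rotation matrix R ∈ SO(3), the 6×6 real matrix B̄(R) is invertible, its operator norm satisfies ‖B̄(R)‖ ≤ Δ_B̄, and the operator norm of its inverse satisfies ‖B̄(R)⁻¹‖ ≤ Δ_B̄inv. -/
open scoped Matrix

/-- The input matrix `B̄(R)` of the quadrotor's uncertain partial dynamics:
a 6×6 block matrix whose first three rows are the blocks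
`[−m⁻¹ R e₃ , 0₃ₓ₃ , m⁻¹ R e₁ , m⁻¹ R e₂]` and whose last three rows are
`[0₃ₓ₁ , J⁻¹ , 0₃ₓ₁ , 0₃ₓ₁]`. -/
noncomputable def Bbar (m : ℝ) (J : Matrix (Fin 3) (Fin 3) ℝ)
    (R : Matrix (Fin 3) (Fin 3) ℝ) : Matrix (Fin 6) (Fin 6) ℝ :=
  Matrix.of fun i j =>
    if hi : (i : ℕ) < 3 then
      -- first three rows
      if (j : ℕ) = 0 then -(m⁻¹ * R ⟨i, hi⟩ 2)
      else if (j : ℕ) = 4 then m⁻¹ * R ⟨i, hi⟩ 0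
      else if (j : ℕ) = 5 then m⁻¹ * R ⟨i, hi⟩ 1
      else 0
    else
      -- last three rows
      if hj : 1 ≤ (j : ℕ) ∧ (j : ℕ) ≤ 3 then
        J⁻¹ ⟨(i : ℕ) - 3, by omega⟩ ⟨(j : ℕ) - 1, by omega⟩
      else 0

/-!
The rotation enters only through the first three rows: `B̄(R) = diag(R, I₃) · B̄(I)`.
For `R` orthogonal, `diag(R, I₃)` is orthogonal, so it changes neither the operator norm of
`B̄(R)` nor that of `B̄(R)⁻¹ = B̄(I)⁻¹ · diag(R, I₃)ᵀ`; hence `Δ_B̄ = ‖B̄(I)‖` and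
`Δ_B̄inv = ‖B̄(I)⁻¹‖` work. Finally `B̄(I) = diag(m⁻¹ I₃, J⁻¹) · P` for a signed permutation
matrix `P`, so it is invertible.
-/

open Matrix

section FinBlockDiag

variable {α : Type*} {k l : ℕ}

def finBlockDiag [Zero α] (A : Matrix (Fin k) (Fin k) α) (B : Matrix (Fin l) (Fin l) α) :
    Matrix (Fin (k + l)) (Fin (k + l)) α :=
  reindex finSumFinEquiv finSumFinEquiv (fromBlocks A 0 0 B)

theorem finBlockDiag_mul [NonUnitalNonAssocSemiring α] (A A' : Matrix (Fin k) (Fin k) α)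
    (B B' : Matrix (Fin l) (Fin l) α) :
    finBlockDiag A B * finBlockDiag A' B' = finBlockDiag (A * A') (B * B') := by
  simp [finBlockDiag, submatrix_mul_equiv, fromBlocks_multiply]

theorem finBlockDiag_one [Zero α] [One α] :
    finBlockDiag (1 : Matrix (Fin k) (Fin k) α) (1 : Matrix (Fin l) (Fin l) α) = 1 := by
  simp [finBlockDiag, fromBlocks_one]

theorem finBlockDiag_conjTranspose [AddMonoid α] [StarAddMonoid α]
    (A : Matrix (Fin k) (Fin k) α) (B : Matrix (Fin l) (Fin l) α) :
    (finBlockDiag A B)ᴴ = finBlockDiag Aᴴ Bᴴ := by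
  simp [finBlockDiag, fromBlocks_conjTranspose]

theorem isUnit_finBlockDiag [Semiring α] {A : Matrix (Fin k) (Fin k) α}
    {B : Matrix (Fin l) (Fin l) α} (hA : IsUnit A) (hB : IsUnit B) :
    IsUnit (finBlockDiag A B) := by
  obtain ⟨u, rfl⟩ := hA
  obtain ⟨v, rfl⟩ := hB
  exact ⟨⟨finBlockDiag u v, finBlockDiag ↑u⁻¹ ↑v⁻¹, by simp [finBlockDiag_mul, finBlockDiag_one],
    by simp [finBlockDiag_mul, finBlockDiag_one]⟩, rfl⟩

theorem finBlockDiag_mem_unitaryGroup [CommRing α] [StarRing α]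
    {A : Matrix (Fin k) (Fin k) α} {B : Matrix (Fin l) (Fin l) α}
    (hA : A ∈ unitaryGroup (Fin k) α) (hB : B ∈ unitaryGroup (Fin l) α) :
    finBlockDiag A B ∈ unitaryGroup (Fin (k + l)) α := by
  rw [mem_unitaryGroup_iff'] at *
  rw [star_eq_conjTranspose, finBlockDiag_conjTranspose, finBlockDiag_mul, ← star_eq_conjTranspose,
    ← star_eq_conjTranspose, hA, hB, finBlockDiag_one]

end FinBlockDiag

section UnitaryMul

variable {𝕜 n : Type*} [RCLike 𝕜] [Fintype n] [DecidableEq n] {U : Matrix n n 𝕜}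

theorem norm_toEuclideanCLM_unitary_mul (hU : U ∈ unitaryGroup n 𝕜) (A : Matrix n n 𝕜) :
    ‖toEuclideanCLM (𝕜 := 𝕜) (U * A)‖ = ‖toEuclideanCLM (𝕜 := 𝕜) A‖ := by
  rw [map_mul]
  exact CStarRing.norm_mem_unitary_mul _ (Unitary.map_mem _ hU)

theorem norm_toEuclideanCLM_mul_unitary (hU : U ∈ unitaryGroup n 𝕜) (A : Matrix n n 𝕜) :
    ‖toEuclideanCLM (𝕜 := 𝕜) (A * U)‖ = ‖toEuclideanCLM (𝕜 := 𝕜) A‖ := by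
  rw [map_mul]
  exact CStarRing.norm_mul_mem_unitary _ (Unitary.map_mem _ hU)

end UnitaryMul

theorem nonsing_inv_eq_star_of_mem_unitaryGroup {n α : Type*} [Fintype n] [DecidableEq n]
    [CommRing α] [StarRing α] {U : Matrix n n α} (hU : U ∈ unitaryGroup n α) : U⁻¹ = star U :=
  inv_eq_left_inv (mem_unitaryGroup_iff'.mp hU)

def inputPerm : Matrix (Fin 6) (Fin 6) ℝ :=
  !![0, 0, 0, 0, 1, 0;
     0, 0, 0, 0, 0, 1;
     -1, 0, 0, 0, 0, 0;
     0, 1, 0, 0, 0, 0;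
     0, 0, 1, 0, 0, 0;
     0, 0, 0, 1, 0, 0]

theorem inputPerm_mem_unitaryGroup : inputPerm ∈ unitaryGroup (Fin 6) ℝ := by
  rw [mem_unitaryGroup_iff']
  ext i j
  fin_cases i <;> fin_cases j <;> simp [inputPerm, mul_apply, Fin.sum_univ_succ]

theorem Bbar_eq_finBlockDiag_mul_inputPerm (m : ℝ) (J R : Matrix (Fin 3) (Fin 3) ℝ) :
    Bbar m J R = finBlockDiag (m⁻¹ • R) J⁻¹ * inputPerm := by
  ext i j
  fin_cases i <;> fin_cases j <;>
    simp [Bbar, finBlockDiag, inputPerm, mul_apply, Fin.sum_univ_succ, finSumFinEquiv, Fin.addCases]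

theorem Bbar_eq_finBlockDiag_mul_Bbar_one (m : ℝ) (J R : Matrix (Fin 3) (Fin 3) ℝ) :
    Bbar m J R = finBlockDiag R (1 : Matrix (Fin 3) (Fin 3) ℝ) * Bbar m J 1 := by
  rw [Bbar_eq_finBlockDiag_mul_inputPerm, Bbar_eq_finBlockDiag_mul_inputPerm, ← mul_assoc,
    finBlockDiag_mul, mul_smul_comm, mul_one, one_mul]

theorem isUnit_Bbar_one {m : ℝ} (hm : m ≠ 0) {J : Matrix (Fin 3) (Fin 3) ℝ} (hJ : IsUnit J) :
    IsUnit (Bbar m J 1) := by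
  rw [Bbar_eq_finBlockDiag_mul_inputPerm]
  refine (isUnit_finBlockDiag ?_ (isUnit_nonsing_inv_iff.mpr hJ)).mul ?_
  · simp [isUnit_iff_isUnit_det, hm]
  · exact Unitary.isUnit_coe (U := ⟨_, inputPerm_mem_unitaryGroup⟩)

/-- Proposition 2 of the paper. For `m > 0` and `J` an invertible
real 3×3 matrix, there are positive constants `Δ_B̄`, `Δ_B̄inv` such that for every
rotation matrix `R ∈ SO(3)`, the matrix `B̄(R)` is invertible, its `ℓ²` operator norm
is at most `Δ_B̄`, and the operator norm of its inverse is at most `Δ_B̄inv`. -/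
theorem bbar_bounded_and_invertible (m : ℝ) (hm : 0 < m)
    (J : Matrix (Fin 3) (Fin 3) ℝ) (hJ : IsUnit J) :
    ∃ ΔB > (0 : ℝ), ∃ ΔBinv > (0 : ℝ),
      ∀ R : Matrix (Fin 3) (Fin 3) ℝ, Rᵀ * R = 1 → R.det = 1 →
        IsUnit (Bbar m J R) ∧
        ‖Matrix.toEuclideanCLM (𝕜 := ℝ) (Bbar m J R)‖ ≤ ΔB ∧
        ‖Matrix.toEuclideanCLM (𝕜 := ℝ) ((Bbar m J R)⁻¹)‖ ≤ ΔBinv := by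
  have hK := isUnit_Bbar_one hm.ne' hJ
  refine ⟨‖toEuclideanCLM (𝕜 := ℝ) (Bbar m J 1)‖, norm_pos_iff.mpr (hK.map _).ne_zero,
    ‖toEuclideanCLM (𝕜 := ℝ) (Bbar m J 1)⁻¹‖,
    norm_pos_iff.mpr ((isUnit_nonsing_inv_iff.mpr hK).map _).ne_zero, fun R hR _ => ?_⟩
  have hQ : finBlockDiag R (1 : Matrix (Fin 3) (Fin 3) ℝ) ∈ unitaryGroup (Fin (3 + 3)) ℝ :=
    finBlockDiag_mem_unitaryGroup (by rwa [mem_unitaryGroup_iff', star_eq_conjTranspose,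
      conjTranspose_eq_transpose_of_trivial]) (one_mem _)
  rw [Bbar_eq_finBlockDiag_mul_Bbar_one, Matrix.mul_inv_rev,
    nonsing_inv_eq_star_of_mem_unitaryGroup hQ]
  exact ⟨(Unitary.isUnit_coe (U := ⟨_, hQ⟩)).mul hK, (norm_toEuclideanCLM_unitary_mul hQ _).le,
    (norm_toEuclideanCLM_mul_unitary (Unitary.star_mem hQ) _).le⟩
end

section
/- Let A be an invertible real n×n matrix, T > 0 a real number such that exp(AT) − I is invertible, B̄ an invertible real n×n matrix, and z̃ ∈ ℝⁿ. Define Φ = A⁻¹(exp(AT) − I) and σ̂ = −B̄⁻¹ Φ⁻¹ exp(AT) z̃. Then exp(AT) z̃ + (exp(AT) − I) A⁻¹ B̄ σ̂ = 0. -/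
open scoped Matrix

namespace Matrix

variable {n α : Type*} [Fintype n] [DecidableEq n] [CommRing α]

theorem commute_nonsing_inv_left {A M : Matrix n n α} (hA : IsUnit A) (h : Commute A M) :
    Commute A⁻¹ M := by
  obtain ⟨u, rfl⟩ := hA
  rw [← coe_units_inv]
  exact h.units_inv_left

end Matrix

open Matrix in
theorem adaptation_law_cancellation_general {n : ℕ}
    (A : Matrix (Fin n) (Fin n) ℝ) (hA : IsUnit A)
    (T : ℝ)
    (hexp : IsUnit (NormedSpace.exp (T • A) - 1))
    (Bbar : Matrix (Fin n) (Fin n) ℝ) (hB : IsUnit Bbar)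
    (ztil : Fin n → ℝ)
    (Φ : Matrix (Fin n) (Fin n) ℝ)
    (hΦ : Φ = A⁻¹ * (NormedSpace.exp (T • A) - 1))
    (σhat : Fin n → ℝ)
    (hσhat : σhat = -((Bbar⁻¹ * Φ⁻¹).mulVec ((NormedSpace.exp (T • A)).mulVec ztil))) :
    (NormedSpace.exp (T • A)).mulVec ztil
      + ((NormedSpace.exp (T • A) - 1) * A⁻¹ * Bbar).mulVec σhat = 0 := by
  have hcomm : Commute A⁻¹ (NormedSpace.exp (T • A) - 1) :=
    commute_nonsing_inv_left hA
      (((Commute.refl A).smul_right T).exp_right.sub_right (Commute.one_right A))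
  have hΦ_eq : (NormedSpace.exp (T • A) - 1) * A⁻¹ = Φ := hΦ ▸ hcomm.eq.symm
  have hΦB : IsUnit (Φ * Bbar) := hΦ ▸ ((isUnit_nonsing_inv_iff.2 hA).mul hexp).mul hB
  rw [hσhat, hΦ_eq, mulVec_neg, mulVec_mulVec, ← Matrix.mul_inv_rev,
    mul_nonsing_inv _ ((isUnit_iff_isUnit_det _).1 hΦB), one_mulVec, add_neg_cancel]

/-- the key cancellation property of the piecewise-constant
adaptation law. With `Φ = A⁻¹(exp(AT) − I)` and
`σ̂ = −B̄⁻¹ Φ⁻¹ exp(AT) z̃`, we have `exp(AT) z̃ + (exp(AT) − I) A⁻¹ B̄ σ̂ = 0`. -/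
theorem adaptation_law_cancellation {n : ℕ}
    (A : Matrix (Fin n) (Fin n) ℝ) (hA : IsUnit A)
    (T : ℝ) (hT : 0 < T)
    (hexp : IsUnit (NormedSpace.exp (T • A) - 1))
    (Bbar : Matrix (Fin n) (Fin n) ℝ) (hB : IsUnit Bbar)
    (ztil : Fin n → ℝ)
    (Φ : Matrix (Fin n) (Fin n) ℝ)
    (hΦ : Φ = A⁻¹ * (NormedSpace.exp (T • A) - 1))
    (σhat : Fin n → ℝ)
    (hσhat : σhat = -((Bbar⁻¹ * Φ⁻¹).mulVec ((NormedSpace.exp (T • A)).mulVec ztil))) :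
    (NormedSpace.exp (T • A)).mulVec ztil
      + ((NormedSpace.exp (T • A) - 1) * A⁻¹ * Bbar).mulVec σhat = 0 :=
  adaptation_law_cancellation_general A hA T hexp Bbar hB ztil Φ hΦ σhat hσhat
end

section
/- Let A = diag(λ₁, …, λ₆) be a diagonal real 6×6 matrix with λᵢ < 0 for every i, let a < b be real numbers, let B̄ : [a,b] → ℝ⁶ˣ⁶ and σ : [a,b] → ℝ⁶ be continuous, and assume B̄(a) is invertible. Define T = b − a, Φ = A⁻¹(exp(AT) − I), and σ̂₀ = −B̄(a)⁻¹ Φ⁻¹ exp(AT) z̃(a), where z̃ : [a,b] → ℝ⁶ is a differentiable function satisfying z̃′(t) = A z̃(t) + B̄(t)(σ̂₀ − σ(t)) for all t ∈ [a,b]. Then there exist τ₁, …, τ₆ ∈ [a,b] and β₁, …, β₆ ∈ [a,b] such that for every i ∈ {1,…,6}, the i-th component of z̃(b) equals ((1 − exp(λᵢ T))/λᵢ) · [ (B̄(τᵢ) σ(τᵢ))ᵢ − ((B̄(βᵢ) − B̄(a)) σ̂₀)ᵢ ], where (·)ᵢ denotes the i-th component of a vector in ℝ⁶. -/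
/-!
Each coordinate `u = z̃ᵢ` solves a scalar equation `u' = λᵢ u + f`, so by variation of constants
`u b = e^{λᵢT} u a + ∫ e^{λᵢ(b-s)} f s ds`. The weight `e^{λᵢ(b-s)}` is positive, so the first mean
value theorem for integrals replaces the two parts `(B̄ σ̂₀)ᵢ` and `(B̄ σ)ᵢ` of `f` by their values at
points `βᵢ` and `τᵢ`, times `∫ e^{λᵢ(b-s)} ds = (e^{λᵢT} - 1)/λᵢ`. Finally `σ̂₀` is chosen so that
`Φ B̄(a) σ̂₀ = -e^{AT} z̃(a)`: the free response `e^{λᵢT} z̃ᵢ(a)` cancels the `B̄(a) σ̂₀` term.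
-/

open Set Matrix intervalIntegral
open scoped Interval

section ScalarLinearODE

variable {a b L : ℝ} {u f g h : ℝ → ℝ}

theorem integral_exp_mul_sub (hL : L ≠ 0) :
    ∫ s in a..b, Real.exp (L * (b - s)) = (Real.exp (L * (b - a)) - 1) / L := by
  simp only [mul_sub]
  rw [integral_comp_sub_mul (fun x => Real.exp x) hL, integral_exp, sub_self, Real.exp_zero,
    smul_eq_mul, inv_mul_eq_div]

theorem linear_ode_variation_of_constants (hab : a ≤ b) (hf : ContinuousOn f (Icc a b))
    (hu : ∀ t ∈ Icc a b, HasDerivAt u (L * u t + f t) t) :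
    u b = Real.exp (L * (b - a)) * u a + ∫ s in a..b, Real.exp (L * (b - s)) * f s := by
  have hderiv : ∀ t ∈ uIcc a b, HasDerivAt (fun s => Real.exp (L * (b - s)) * u s)
      (Real.exp (L * (b - t)) * f t) t := by
    intro t ht
    rw [uIcc_of_le hab] at ht
    have hexp : HasDerivAt (fun s => Real.exp (L * (b - s))) (Real.exp (L * (b - t)) * -L) t := by
      simpa using (((hasDerivAt_id t).const_sub b).const_mul L).exp
    exact (hexp.mul (hu t ht)).congr_deriv (by ring)
  have hint :
      IntervalIntegrable (fun s => Real.exp (L * (b - s)) * f s) MeasureTheory.volume a b :=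
    ContinuousOn.intervalIntegrable (by rw [uIcc_of_le hab]; fun_prop)
  rw [integral_eq_sub_of_hasDerivAt hderiv hint, sub_self, mul_zero, Real.exp_zero]
  ring

theorem linear_ode_exists_mean_value (hab : a ≤ b) (hL : L ≠ 0)
    (hg : ContinuousOn g (Icc a b)) (hh : ContinuousOn h (Icc a b))
    (hu : ∀ t ∈ Icc a b, HasDerivAt u (L * u t + (g t - h t)) t) :
    ∃ τ ∈ Icc a b, ∃ β ∈ Icc a b,
      u b = Real.exp (L * (b - a)) * u a + (Real.exp (L * (b - a)) - 1) / L * (g β - h τ) := by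
  have hI : uIcc a b = Icc a b := uIcc_of_le hab
  set w : ℝ → ℝ := fun s => Real.exp (L * (b - s))
  have hw : IntervalIntegrable w MeasureTheory.volume a b := by
    apply Continuous.intervalIntegrable; fun_prop
  have hw_nonneg : ∀ s ∈ Ι a b, 0 ≤ w s := fun s _ => (Real.exp_pos _).le
  obtain ⟨β, hβ, hgβ⟩ := exists_eq_const_mul_intervalIntegral_of_nonneg (hI ▸ hg) hw hw_nonneg
  obtain ⟨τ, hτ, hhτ⟩ := exists_eq_const_mul_intervalIntegral_of_nonneg (hI ▸ hh) hw hw_nonneg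
  refine ⟨τ, hI ▸ hτ, β, hI ▸ hβ, ?_⟩
  have hsplit : ∫ s in a..b, w s * (g s - h s)
      = (∫ s in a..b, g s * w s) - ∫ s in a..b, h s * w s := by
    rw [← integral_sub (hw.continuousOn_mul (hI ▸ hg)) (hw.continuousOn_mul (hI ▸ hh))]
    exact integral_congr fun s _ => by ring
  rw [linear_ode_variation_of_constants (f := fun t => g t - h t) hab (hg.sub hh) hu, hsplit, hgβ,
    hhτ, integral_exp_mul_sub hL]
  ring

end ScalarLinearODE

section Diagonal

variable {n : Type*} [Fintype n] [DecidableEq n]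

theorem exp_smul_diagonal (T : ℝ) (d : n → ℝ) :
    NormedSpace.exp (T • diagonal d) = diagonal fun i => Real.exp (T * d i) := by
  rw [← diagonal_smul, exp_diagonal, Pi.exp_def, Real.exp_eq_exp_ℝ]
  rfl

theorem inv_diagonal_of_ne_zero {K : Type*} [Field K] {d : n → K} (hd : ∀ i, d i ≠ 0) :
    (diagonal d)⁻¹ = diagonal fun i => (d i)⁻¹ :=
  inv_eq_left_inv (by simp [diagonal_mul_diagonal, hd])

theorem inv_diagonal_mul_exp_smul_diagonal_sub_one {d : n → ℝ} (hd : ∀ i, d i ≠ 0) (T : ℝ) :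
    (diagonal d)⁻¹ * (NormedSpace.exp (T • diagonal d) - 1)
      = diagonal fun i => (Real.exp (T * d i) - 1) / d i := by
  rw [inv_diagonal_of_ne_zero hd, exp_smul_diagonal, ← diagonal_one, diagonal_sub,
    diagonal_mul_diagonal]
  simp only [inv_mul_eq_div]

end Diagonal

/-- equation (28) of the paper: after applying the
piecewise-constant adaptation law, the prediction error at the end of a sampling
interval is expressed purely through mean-value points of the forcing terms. -/
theorem prediction_error_mean_value_form
    (lam : Fin 6 → ℝ) (hlam : ∀ i, lam i < 0)
    (a b : ℝ) (hab : a < b)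
    (Bbar : ℝ → Matrix (Fin 6) (Fin 6) ℝ) (σ : ℝ → Fin 6 → ℝ)
    (hBcont : ContinuousOn Bbar (Set.Icc a b))
    (hσcont : ContinuousOn σ (Set.Icc a b))
    (hBa : IsUnit (Bbar a))
    (T : ℝ) (hT : T = b - a)
    (A : Matrix (Fin 6) (Fin 6) ℝ) (hA : A = Matrix.diagonal lam)
    (Φ : Matrix (Fin 6) (Fin 6) ℝ)
    (hΦ : Φ = A⁻¹ * (NormedSpace.exp (T • A) - 1))
    (ztil : ℝ → Fin 6 → ℝ)
    (σhat0 : Fin 6 → ℝ)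
    (hσhat0 : σhat0
      = -(((Bbar a)⁻¹ * Φ⁻¹).mulVec ((NormedSpace.exp (T • A)).mulVec (ztil a))))
    (hz : ∀ t ∈ Set.Icc a b,
      HasDerivAt ztil (A.mulVec (ztil t) + (Bbar t).mulVec (σhat0 - σ t)) t) :
    ∃ τ : Fin 6 → ℝ, ∃ β : Fin 6 → ℝ,
      (∀ i, τ i ∈ Set.Icc a b) ∧ (∀ i, β i ∈ Set.Icc a b) ∧
      ∀ i, ztil b i
        = (1 - Real.exp (lam i * T)) / lam i *
            (((Bbar (τ i)).mulVec (σ (τ i))) i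
              - ((Bbar (β i) - Bbar a).mulVec σhat0) i) := by
  subst hT hA
  have hE : ∀ i, Real.exp ((b - a) * lam i) - 1 ≠ 0 := fun i =>
    (sub_neg.2 (Real.exp_lt_one_iff.2 (mul_neg_of_pos_of_neg (sub_pos.2 hab) (hlam i)))).ne
  rw [inv_diagonal_mul_exp_smul_diagonal_sub_one (fun i => (hlam i).ne)] at hΦ
  have hΦunit : IsUnit Φ := by
    rw [hΦ, isUnit_diagonal, Pi.isUnit_iff]
    exact fun i => (div_ne_zero (hE i) (hlam i).ne).isUnit
  have hΦBσ :
      Φ *ᵥ (Bbar a *ᵥ σhat0) = -(NormedSpace.exp ((b - a) • diagonal lam) *ᵥ ztil a) := by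
    rw [hσhat0, ← Matrix.mul_inv_rev]
    simp only [mulVec_neg, mulVec_mulVec, ← mul_assoc]
    rw [mul_nonsing_inv _ ((isUnit_iff_isUnit_det _).1 (hΦunit.mul hBa)), one_mul]
  have key : ∀ i, ∃ τ ∈ Icc a b, ∃ β ∈ Icc a b, ztil b i
      = (1 - Real.exp (lam i * (b - a))) / lam i *
          ((Bbar τ *ᵥ σ τ) i - ((Bbar β - Bbar a) *ᵥ σhat0) i) := by
    intro i
    have hBσ0 := congrFun hΦBσ i
    simp only [hΦ, exp_smul_diagonal, mulVec_diagonal, Pi.neg_apply] at hBσ0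
    obtain ⟨τ, hτ, β, hβ, hzb⟩ := linear_ode_exists_mean_value (u := fun t => ztil t i)
      (g := fun t => (Bbar t *ᵥ σhat0) i) (h := fun t => (Bbar t *ᵥ σ t) i) hab.le (hlam i).ne
      (by fun_prop) (by fun_prop)
      (fun t ht => by simpa [mulVec_diagonal, mulVec_sub] using hasDerivAt_pi.mp (hz t ht) i)
    refine ⟨τ, hτ, β, hβ, ?_⟩
    rw [hzb, sub_mulVec, Pi.sub_apply, mul_comm (lam i)]
    field_simp at hBσ0 ⊢
    linear_combination hBσ0
  choose τ hτ β hβ h using key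
  exact ⟨τ, β, hτ, hβ, h⟩
end

section
/- Let Q ∈ SO(3), and set Ψ(Q) = trace(I − Q)/2 and e(Q) ∈ ℝ³ the vector with components e(Q)₁ = (Q₃₂ − Q₂₃)/2, e(Q)₂ = (Q₁₃ − Q₃₁)/2, e(Q)₃ = (Q₂₁ − Q₁₂)/2. Then (1/2)‖e(Q)‖² ≤ Ψ(Q); moreover, if ψ₁ is a real number with Ψ(Q) ≤ ψ₁ < 2, then Ψ(Q) ≤ ‖e(Q)‖²/(2 − ψ₁). -/
/-!
On `SO(3)` one has the identity `‖e(Q)‖² = Ψ(Q) (2 - Ψ(Q))`. With `t = trace Q`, orthonormality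
of the rows gives `∑_{i≠j} Q_ij² = 3 - ∑ Q_ii²`, and `adj Q = Qᵀ` (from `det Q = 1`) makes each
`Q_ii` equal to its principal cofactor, which expresses `∑_{i<j} Q_ij Q_ji` through the diagonal;
both sides then equal `(3 - t)(1 + t)/4`. The two bounds are elementary facts about `ψ (2 - ψ)`,
the second using `ψ ≥ 0`, which the identity itself forces once `ψ < 2`.
-/

open scoped Matrix

namespace Matrix

variable {n R : Type*} [Fintype n] [DecidableEq n] [CommRing R]

theorem adjugate_eq_transpose_of_transpose_mul_self_eq_one {Q : Matrix n n R}
    (hQ : Qᵀ * Q = 1) (hdet : Q.det = 1) : Q.adjugate = Qᵀ :=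
  calc Q.adjugate = Q.adjugate * (Q * Qᵀ) := by rw [mul_eq_one_comm.mp hQ, Matrix.mul_one]
    _ = Qᵀ := by rw [← Matrix.mul_assoc, adjugate_mul, hdet, one_smul, Matrix.one_mul]

end Matrix

noncomputable def rotationError (Q : Matrix (Fin 3) (Fin 3) ℝ) : ℝ :=
  Matrix.trace (1 - Q) / 2

noncomputable def attitudeError (Q : Matrix (Fin 3) (Fin 3) ℝ) : EuclideanSpace ℝ (Fin 3) :=
  (WithLp.equiv 2 (Fin 3 → ℝ)).symm
    ![(Q 2 1 - Q 1 2) / 2, (Q 0 2 - Q 2 0) / 2, (Q 1 0 - Q 0 1) / 2]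

theorem norm_attitudeError_sq (Q : Matrix (Fin 3) (Fin 3) ℝ) :
    ‖attitudeError Q‖ ^ 2 =
      ((Q 2 1 - Q 1 2) / 2) ^ 2 + ((Q 0 2 - Q 2 0) / 2) ^ 2 + ((Q 1 0 - Q 0 1) / 2) ^ 2 := by
  simp [attitudeError, EuclideanSpace.real_norm_sq_eq, Fin.sum_univ_three]

theorem norm_attitudeError_sq_eq_rotationError_mul {Q : Matrix (Fin 3) (Fin 3) ℝ}
    (hQ : Qᵀ * Q = 1) (hdet : Q.det = 1) :
    ‖attitudeError Q‖ ^ 2 = rotationError Q * (2 - rotationError Q) := by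
  have hrow (i : Fin 3) : Q i 0 ^ 2 + Q i 1 ^ 2 + Q i 2 ^ 2 = 1 := by
    have := Matrix.ext_iff.mpr (mul_eq_one_comm.mp hQ) i i
    simpa only [sq, Matrix.mul_apply, Matrix.transpose_apply, Fin.sum_univ_three,
      Matrix.one_apply_eq] using this
  have hcof (i : Fin 3) : Q.adjugate i i = Q i i :=
    Matrix.ext_iff.mpr (Q.adjugate_eq_transpose_of_transpose_mul_self_eq_one hQ hdet) i i
  have hcof0 := hcof 0
  have hcof1 := hcof 1
  have hcof2 := hcof 2
  simp only [Matrix.adjugate_fin_three, Matrix.of_apply, Matrix.cons_val', Matrix.cons_val_zero,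
    Matrix.cons_val_fin_one, Matrix.cons_val_one, Matrix.cons_val] at hcof0 hcof1 hcof2
  rw [norm_attitudeError_sq, rotationError, Matrix.trace_fin_three]
  simp only [Matrix.sub_apply, Matrix.one_apply_eq]
  linear_combination (hrow 0 + hrow 1 + hrow 2) / 4 + (hcof0 + hcof1 + hcof2) / 2

theorem half_mul_mul_two_sub_le (ψ : ℝ) : 1 / 2 * (ψ * (2 - ψ)) ≤ ψ := by
  nlinarith [sq_nonneg ψ]

theorem le_mul_two_sub_div {ψ ψ₁ : ℝ} (hψ : 0 ≤ ψ) (hle : ψ ≤ ψ₁) (hlt : ψ₁ < 2) :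
    ψ ≤ ψ * (2 - ψ) / (2 - ψ₁) := by
  rw [le_div_iff₀ (by linarith)]
  gcongr

/-- for `Q ∈ SO(3)`, `(1/2)‖e(Q)‖² ≤ Ψ(Q)`; moreover, if
`Ψ(Q) ≤ ψ₁ < 2` then `Ψ(Q) ≤ ‖e(Q)‖²/(2 − ψ₁)`. Here `Ψ(Q) = trace(I − Q)/2`
and `e(Q) = ((Q − Qᵀ)^∨)/2`, with the Euclidean norm on ℝ³. -/
theorem rotation_error_sandwich (Q : Matrix (Fin 3) (Fin 3) ℝ)
    (hQ : Qᵀ * Q = 1) (hdet : Q.det = 1) :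
    (1 / 2) * ‖(WithLp.equiv 2 (Fin 3 → ℝ)).symm
        ![(Q 2 1 - Q 1 2) / 2, (Q 0 2 - Q 2 0) / 2, (Q 1 0 - Q 0 1) / 2]‖ ^ 2
      ≤ Matrix.trace (1 - Q) / 2
    ∧ ∀ ψ₁ : ℝ, Matrix.trace (1 - Q) / 2 ≤ ψ₁ → ψ₁ < 2 →
        Matrix.trace (1 - Q) / 2
          ≤ ‖(WithLp.equiv 2 (Fin 3 → ℝ)).symm
              ![(Q 2 1 - Q 1 2) / 2, (Q 0 2 - Q 2 0) / 2, (Q 1 0 - Q 0 1) / 2]‖ ^ 2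
            / (2 - ψ₁) := by
  have key := norm_attitudeError_sq_eq_rotationError_mul hQ hdet
  change 1 / 2 * ‖attitudeError Q‖ ^ 2 ≤ rotationError Q ∧ ∀ ψ₁ : ℝ, rotationError Q ≤ ψ₁ →
    ψ₁ < 2 → rotationError Q ≤ ‖attitudeError Q‖ ^ 2 / (2 - ψ₁)
  rw [key]
  refine ⟨half_mul_mul_two_sub_le _, fun ψ₁ hle hlt => le_mul_two_sub_div ?_ hle hlt⟩
  have hprod : 0 ≤ rotationError Q * (2 - rotationError Q) := key ▸ sq_nonneg _
  exact nonneg_of_mul_nonneg_left hprod (by linarith)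
end

section
/- For every rotation matrix Q ∈ SO(3) and every vector v ∈ ℝ³, the inequality ‖trace(Q)·v − Q v‖ ≤ 2‖v‖ holds; equivalently, the operator norm of the matrix C(Q) = (trace(Q)·I − Q)/2 is at most 1. -/
open scoped Matrix ComplexOrder

/-!
Write `t = tr Q`, `N = ‖v‖²` and `x = ⟪v, Q v⟫`, so that `‖t v - Q v‖² = t² N - 2 t x + N`.
Besides `t ∈ [-1, 3]` and `x ≤ N`, the argument needs the lower bound `(t - 1) N ≤ 2 x`, i.e.
that `S = Q + Qᵀ - (t - 1) I` is positive semidefinite. By Cayley–Hamilton,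
`Qᵀ = adj Q = Q² - t Q + t I`, hence `S Q = S` and `S² = (3 - t) S`; a symmetric matrix with
`S² = c S` and `c ≥ 0` is positive semidefinite. The bound then follows by splitting on the
sign of `t`.
-/

namespace Matrix

variable {n : Type*} [Fintype n]

theorem posSemidef_of_mul_self_eq_smul {𝕜 : Type*} [RCLike 𝕜] {M : Matrix n n 𝕜}
    (hM : M.IsHermitian) {c : ℝ} (hc : 0 ≤ c) (hMM : M * M = c • M) : M.PosSemidef := by
  have hgram : Mᴴ * M = c • M := by rw [hM.eq, hMM]
  rcases hc.eq_or_lt with rfl | hc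
  · rw [zero_smul, conjTranspose_mul_self_eq_zero] at hgram
    exact hgram ▸ PosSemidef.zero
  · have hM_eq : M = c⁻¹ • (Mᴴ * M) := by
      rw [hgram, smul_smul, inv_mul_cancel₀ hc.ne', one_smul]
    rw [hM_eq]
    exact (posSemidef_conjTranspose_mul_self M).smul (inv_nonneg.mpr hc.le)

theorem trace_mul_self_le_trace_transpose_mul_self (A : Matrix n n ℝ) :
    (A * A).trace ≤ (Aᵀ * A).trace := by
  have h := (posSemidef_conjTranspose_mul_self (A - Aᵀ)).trace_nonneg
  have hAAt : (A * Aᵀ).trace = (Aᵀ * A).trace := trace_mul_comm A Aᵀ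
  have hAtAt : (Aᵀ * Aᵀ).trace = (A * A).trace := by rw [← transpose_mul, trace_transpose]
  simp only [conjTranspose_eq_transpose_of_trivial, transpose_sub, transpose_transpose,
    sub_mul, mul_sub, trace_sub] at h
  linarith

theorem adjugate_eq_transpose_of_orthogonal {R : Type*} [CommRing R] [DecidableEq n]
    {Q : Matrix n n R} (hQ : Qᵀ * Q = 1) (hdet : Q.det = 1) : Q.adjugate = Qᵀ :=
  left_inv_eq_left_inv (by rw [adjugate_mul, hdet, one_smul]) hQ

theorem adjugate_fin_three_eq {R : Type*} [CommRing R] (A : Matrix (Fin 3) (Fin 3) R) :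
    A.adjugate = A * A - A.trace • A + A.adjugate.trace • 1 := by
  ext i j
  fin_cases i <;> fin_cases j <;>
    simp [adjugate_fin_three, trace_fin_three, mul_apply, Fin.sum_univ_three] <;> ring

theorem dotProduct_mulVec_self_of_orthogonal [DecidableEq n] {Q : Matrix n n ℝ}
    (hQ : Qᵀ * Q = 1) (v : n → ℝ) :
    Q *ᵥ v ⬝ᵥ Q *ᵥ v = v ⬝ᵥ v := by
  rw [dotProduct_mulVec, ← vecMul_transpose, vecMul_vecMul, hQ, vecMul_one]

theorem dotProduct_mulVec_le_of_orthogonal [DecidableEq n] {Q : Matrix n n ℝ}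
    (hQ : Qᵀ * Q = 1) (v : n → ℝ) :
    v ⬝ᵥ Q *ᵥ v ≤ v ⬝ᵥ v := by
  have h : 0 ≤ (v - Q *ᵥ v) ⬝ᵥ (v - Q *ᵥ v) := dotProduct_self_star_nonneg _
  rw [sub_dotProduct, dotProduct_sub, dotProduct_sub, dotProduct_mulVec_self_of_orthogonal hQ,
    dotProduct_comm (Q *ᵥ v)] at h
  linarith

/-- For the rotation by angle `θ` about the unit axis `a` this is `2 (1 - cos θ) a aᵀ`, since
`Q + Qᵀ = 2 cos θ • 1 + 2 (1 - cos θ) a aᵀ` and `tr Q = 1 + 2 cos θ`. -/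
def rotationAxisMatrix (Q : Matrix (Fin 3) (Fin 3) ℝ) : Matrix (Fin 3) (Fin 3) ℝ :=
  Q + Qᵀ - (Q.trace - 1) • 1

theorem isHermitian_rotationAxisMatrix (Q : Matrix (Fin 3) (Fin 3) ℝ) :
    (rotationAxisMatrix Q).IsHermitian := by
  simp only [IsHermitian, rotationAxisMatrix, conjTranspose_eq_transpose_of_trivial,
    transpose_sub, transpose_add, transpose_transpose, transpose_smul, transpose_one, add_comm]

theorem dotProduct_rotationAxisMatrix_mulVec (Q : Matrix (Fin 3) (Fin 3) ℝ)
    (v : Fin 3 → ℝ) :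
    v ⬝ᵥ rotationAxisMatrix Q *ᵥ v = 2 * (v ⬝ᵥ Q *ᵥ v) - (Q.trace - 1) * (v ⬝ᵥ v) := by
  rw [rotationAxisMatrix, sub_mulVec, add_mulVec, smul_mulVec, one_mulVec, dotProduct_sub,
    dotProduct_add, dotProduct_smul, smul_eq_mul, dotProduct_mulVec v Qᵀ, vecMul_transpose,
    dotProduct_comm (Q *ᵥ v)]
  ring

section SpecialOrthogonal

variable {Q : Matrix (Fin 3) (Fin 3) ℝ} (hQ : Qᵀ * Q = 1) (hdet : Q.det = 1)
include hQ hdet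

theorem transpose_eq_of_specialOrthogonal : Qᵀ = Q * Q - Q.trace • Q + Q.trace • 1 := by
  conv_lhs => rw [← adjugate_eq_transpose_of_orthogonal hQ hdet, adjugate_fin_three_eq]
  rw [adjugate_eq_transpose_of_orthogonal hQ hdet, trace_transpose]

theorem trace_mul_self_of_specialOrthogonal : (Q * Q).trace = Q.trace ^ 2 - 2 * Q.trace := by
  have h := congrArg trace (transpose_eq_of_specialOrthogonal hQ hdet)
  simp only [trace_transpose, trace_add, trace_sub, trace_smul, trace_one, Fintype.card_fin,
    smul_eq_mul] at h
  linear_combination -h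

theorem trace_mem_Icc_of_specialOrthogonal : Q.trace ∈ Set.Icc (-1) 3 := by
  have h := trace_mul_self_le_trace_transpose_mul_self Q
  rw [hQ, trace_one, Fintype.card_fin, Nat.cast_ofNat,
    trace_mul_self_of_specialOrthogonal hQ hdet] at h
  constructor <;> nlinarith

theorem rotationAxisMatrix_eq_of_specialOrthogonal :
    rotationAxisMatrix Q = Q * Q + (1 - Q.trace) • Q + 1 := by
  rw [rotationAxisMatrix, transpose_eq_of_specialOrthogonal hQ hdet]
  module

theorem rotationAxisMatrix_mul_of_specialOrthogonal :
    rotationAxisMatrix Q * Q = rotationAxisMatrix Q := by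
  have h : Q * Qᵀ = 1 := mul_eq_one_comm.mpr hQ
  rw [transpose_eq_of_specialOrthogonal hQ hdet] at h
  simp only [mul_add, mul_sub, mul_smul_comm, mul_one, ← mul_assoc] at h
  rw [rotationAxisMatrix_eq_of_specialOrthogonal hQ hdet]
  simp only [add_mul, smul_mul_assoc, one_mul]
  linear_combination (norm := module) h

theorem rotationAxisMatrix_mul_self_of_specialOrthogonal :
    rotationAxisMatrix Q * rotationAxisMatrix Q = (3 - Q.trace) • rotationAxisMatrix Q := by
  have hMQ := rotationAxisMatrix_mul_of_specialOrthogonal hQ hdet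
  conv_lhs => arg 2; rw [rotationAxisMatrix_eq_of_specialOrthogonal hQ hdet]
  simp only [mul_add, mul_smul_comm, ← mul_assoc, hMQ, mul_one]
  module

theorem posSemidef_rotationAxisMatrix : (rotationAxisMatrix Q).PosSemidef :=
  posSemidef_of_mul_self_eq_smul (isHermitian_rotationAxisMatrix Q)
    (sub_nonneg.mpr (trace_mem_Icc_of_specialOrthogonal hQ hdet).2)
    (rotationAxisMatrix_mul_self_of_specialOrthogonal hQ hdet)

theorem dotProduct_trace_smul_sub_mulVec_le (v : Fin 3 → ℝ) :
    (Q.trace • v - Q *ᵥ v) ⬝ᵥ (Q.trace • v - Q *ᵥ v) ≤ 4 * (v ⬝ᵥ v) := by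
  obtain ⟨ht_ge, ht_le⟩ := trace_mem_Icc_of_specialOrthogonal hQ hdet
  have hN : 0 ≤ v ⬝ᵥ v := dotProduct_self_star_nonneg v
  have hx_le := dotProduct_mulVec_le_of_orthogonal hQ v
  have hx_ge : (Q.trace - 1) * (v ⬝ᵥ v) ≤ 2 * (v ⬝ᵥ Q *ᵥ v) := by
    have h := (posSemidef_rotationAxisMatrix hQ hdet).dotProduct_mulVec_nonneg v
    rw [star_trivial, dotProduct_rotationAxisMatrix_mulVec] at h
    linarith
  have hexpand : (Q.trace • v - Q *ᵥ v) ⬝ᵥ (Q.trace • v - Q *ᵥ v) =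
      Q.trace ^ 2 * (v ⬝ᵥ v) - 2 * Q.trace * (v ⬝ᵥ Q *ᵥ v) + v ⬝ᵥ v := by
    rw [sub_dotProduct, dotProduct_sub, dotProduct_sub, dotProduct_mulVec_self_of_orthogonal hQ,
      dotProduct_comm (Q *ᵥ v)]
    simp only [smul_dotProduct, dotProduct_smul, smul_eq_mul]
    ring
  rw [hexpand]
  rcases le_total 0 Q.trace with ht | ht
  · nlinarith [mul_le_mul_of_nonneg_left hx_ge ht]
  · have hfactor : 0 ≤ (3 - Q.trace) * (1 + Q.trace) :=
      mul_nonneg (sub_nonneg.2 ht_le) (neg_le_iff_add_nonneg'.1 ht_ge)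
    nlinarith [mul_le_mul_of_nonpos_left hx_le ht, mul_nonneg hfactor hN]

end SpecialOrthogonal

end Matrix

theorem norm_sq_equiv_symm_eq_dotProduct {n : Type*} [Fintype n] (u : n → ℝ) :
    ‖(WithLp.equiv 2 (n → ℝ)).symm u‖ ^ 2 = u ⬝ᵥ u := by
  rw [EuclideanSpace.real_norm_sq_eq]
  simp [dotProduct, sq]

/-- for every rotation matrix `Q ∈ SO(3)` and every `v ∈ ℝ³`,
`‖trace(Q)·v − Q v‖ ≤ 2‖v‖` (Euclidean norm on ℝ³); i.e. the operator norm of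
`C(Q) = (trace(Q)·I − Q)/2` is at most 1. -/
theorem trace_smul_sub_mulVec_norm_le (Q : Matrix (Fin 3) (Fin 3) ℝ)
    (hQ : Qᵀ * Q = 1) (hdet : Q.det = 1) (v : Fin 3 → ℝ) :
    ‖(WithLp.equiv 2 (Fin 3 → ℝ)).symm (Matrix.trace Q • v - Q.mulVec v)‖
      ≤ 2 * ‖(WithLp.equiv 2 (Fin 3 → ℝ)).symm v‖ := by
  rw [← sq_le_sq₀ (norm_nonneg _) (by positivity), mul_pow, norm_sq_equiv_symm_eq_dotProduct,
    norm_sq_equiv_symm_eq_dotProduct]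
  linarith [Matrix.dotProduct_trace_smul_sub_mulVec_le hQ hdet v]
end

section
/- Let K_p, m, K_R > 0 and c₁, c₂ ≥ 0 be real constants, let e_p, e_v, e_Ω ∈ ℝ³, let J be a real 3×3 matrix and λ_m, λ_M real numbers such that λ_m‖w‖² ≤ ⟨w, J w⟩ ≤ λ_M‖w‖² for all w ∈ ℝ³, let R, R_d ∈ SO(3), set Q = R_dᵀ R, Ψ = trace(I − Q)/2, and let e_R ∈ ℝ³ be the vector with components (Q₃₂ − Q₂₃)/2, (Q₁₃ − Q₃₁)/2, (Q₂₁ − Q₁₂)/2. Suppose ψ₁ is a real number with Ψ ≤ ψ₁ < 1. Define V = (1/2)K_p‖e_p‖² + (1/2)m‖e_v‖² + c₁⟨e_p, e_v⟩ + (1/2)⟨e_Ω, J e_Ω⟩ + K_R Ψ + c₂⟨e_R, e_Ω⟩. Then (1/2)(K_p‖e_p‖² − 2c₁‖e_p‖‖e_v‖ + m‖e_v‖²) + (1/2)(K_R‖e_R‖² − 2c₂‖e_R‖‖e_Ω‖ + λ_m‖e_Ω‖²) ≤ V ≤ (1/2)(K_p‖e_p‖² + 2c₁‖e_p‖‖e_v‖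 + m‖e_v‖²) + (1/2)((2K_R/(2−ψ₁))‖e_R‖² + 2c₂‖e_R‖‖e_Ω‖ + λ_M‖e_Ω‖²). -/
open scoped Matrix RealInnerProductSpace

/-!
For a rotation `Q` with `Ψ = tr(1 - Q)/2`, the vector `e_R` of the skew part of `Q`
satisfies `‖e_R‖² = Ψ (2 - Ψ)`: summing the diagonal of `adj Q = Qᵀ` and the unit row
norms gives `∑ (Q_ij - Q_ji)² = (3 - tr Q)(1 + tr Q)`. Since `0 ≤ Ψ ≤ ψ₁ < 2`, this pins
`K_R Ψ` between `K_R ‖e_R‖² / 2` and `K_R ‖e_R‖² / (2 - ψ₁)`. The cross terms `c ⟨x, y⟩`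
are bounded by Cauchy–Schwarz and the inertia term by the bounds on `J`.
-/

theorem abs_mul_real_inner_le {E : Type*} [NormedAddCommGroup E] [InnerProductSpace ℝ E]
    {c : ℝ} (hc : 0 ≤ c) (x y : E) : |c * ⟪x, y⟫| ≤ c * (‖x‖ * ‖y‖) := by
  rw [abs_mul, abs_of_nonneg hc]
  exact mul_le_mul_of_nonneg_left (abs_real_inner_le_norm x y) hc

namespace Matrix

section

variable {n R : Type*} [Fintype n] [DecidableEq n] [CommRing R]

theorem transpose_mul_mem_specialOrthogonalGroup {A B : Matrix n n R}
    (hA : A ∈ specialOrthogonalGroup n R) (hB : B ∈ specialOrthogonalGroup n R) :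
    Aᵀ * B ∈ specialOrthogonalGroup n R :=
  mul_mem (star (⟨A, hA⟩ : specialOrthogonalGroup n R)).2 hB

theorem adjugate_eq_transpose_of_mem_specialOrthogonalGroup {A : Matrix n n R}
    (hA : A ∈ specialOrthogonalGroup n R) : A.adjugate = Aᵀ := by
  obtain ⟨hAA, hdet⟩ := mem_specialOrthogonalGroup_iff.mp hA
  rw [mem_orthogonalGroup_iff'] at hAA
  calc A.adjugate = Aᵀ * A * A.adjugate := by rw [hAA, Matrix.one_mul]
    _ = Aᵀ := by rw [Matrix.mul_assoc, mul_adjugate, hdet, one_smul, Matrix.mul_one]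

theorem trace_le_card_of_mem_orthogonalGroup {A : Matrix n n ℝ}
    (hA : A ∈ orthogonalGroup n ℝ) : A.trace ≤ Fintype.card n := by
  rw [trace, ← nsmul_one, ← Finset.card_univ, ← Finset.sum_const]
  exact Finset.sum_le_sum fun i _ =>
    (le_abs_self _).trans (entry_norm_bound_of_unitary hA i i)

end

/-- The attitude error function `Ψ` of the paper. -/
noncomputable def configError (Q : Matrix (Fin 3) (Fin 3) ℝ) : ℝ := trace (1 - Q) / 2

/-- The vee map applied to the skew part `(Q - Qᵀ) / 2`; this is the paper's `e_R`. -/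
noncomputable def skewVee (Q : Matrix (Fin 3) (Fin 3) ℝ) : EuclideanSpace ℝ (Fin 3) :=
  (WithLp.equiv 2 (Fin 3 → ℝ)).symm
    ![(Q 2 1 - Q 1 2) / 2, (Q 0 2 - Q 2 0) / 2, (Q 1 0 - Q 0 1) / 2]

variable {Q : Matrix (Fin 3) (Fin 3) ℝ}

theorem configError_nonneg (hQ : Q ∈ orthogonalGroup (Fin 3) ℝ) : 0 ≤ configError Q := by
  have htr := trace_le_card_of_mem_orthogonalGroup hQ
  rw [configError, trace_sub, trace_one]
  simp only [Fintype.card_fin, Nat.cast_ofNat] at htr ⊢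
  linarith

theorem norm_skewVee_sq (hQ : Q ∈ specialOrthogonalGroup (Fin 3) ℝ) :
    ‖skewVee Q‖ ^ 2 = configError Q * (2 - configError Q) := by
  have hadj := adjugate_eq_transpose_of_mem_specialOrthogonalGroup hQ
  have hrows : Q * Qᵀ = 1 := (mem_orthogonalGroup_iff _ _).mp hQ.1
  rw [adjugate_fin_three] at hadj
  have h00 := congrFun (congrFun hadj 0) 0
  have h11 := congrFun (congrFun hadj 1) 1
  have h22 := congrFun (congrFun hadj 2) 2
  have r0 := congrFun (congrFun hrows 0) 0
  have r1 := congrFun (congrFun hrows 1) 1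
  have r2 := congrFun (congrFun hrows 2) 2
  simp only [of_apply, cons_val', cons_val_zero, cons_val_fin_one, transpose_apply,
    cons_val_one, cons_val, mul_apply, Fin.sum_univ_three, one_apply_eq] at h00 h11 h22 r0 r1 r2
  rw [EuclideanSpace.norm_sq_eq, Fin.sum_univ_three, configError, trace_sub, trace_one,
    trace_fin_three]
  simp only [skewVee, WithLp.equiv_symm_apply, cons_val_zero, cons_val_one, cons_val,
    Real.norm_eq_abs, sq_abs, Fintype.card_fin, Nat.cast_ofNat]
  linear_combination (r0 + r1 + r2 + 2 * h00 + 2 * h11 + 2 * h22) / 4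

theorem norm_skewVee_sq_le_two_mul_configError (hQ : Q ∈ specialOrthogonalGroup (Fin 3) ℝ) :
    ‖skewVee Q‖ ^ 2 ≤ 2 * configError Q := by
  rw [norm_skewVee_sq hQ]
  nlinarith [sq_nonneg (configError Q)]

theorem configError_le_norm_skewVee_sq_div (hQ : Q ∈ specialOrthogonalGroup (Fin 3) ℝ)
    {ψ : ℝ} (hψ : configError Q ≤ ψ) (hψ₂ : ψ < 2) :
    configError Q ≤ ‖skewVee Q‖ ^ 2 / (2 - ψ) := by
  rw [le_div_iff₀ (by linarith), norm_skewVee_sq hQ]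
  exact mul_le_mul_of_nonneg_left (by linarith) (configError_nonneg hQ.1)

end Matrix

theorem lyapunov_sandwich_general
    (Kp m KR c₁ c₂ : ℝ) (hKR : 0 < KR)
    (hc₁ : 0 ≤ c₁) (hc₂ : 0 ≤ c₂)
    (ep ev eΩ : EuclideanSpace ℝ (Fin 3))
    (J : Matrix (Fin 3) (Fin 3) ℝ) (lm lM : ℝ)
    (hJ : ∀ w : EuclideanSpace ℝ (Fin 3),
      lm * ‖w‖ ^ 2 ≤ ⟪w, Matrix.toEuclideanLin J w⟫ ∧
      ⟪w, Matrix.toEuclideanLin J w⟫ ≤ lM * ‖w‖ ^ 2)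
    (R Rd : Matrix (Fin 3) (Fin 3) ℝ)
    (hR : Rᵀ * R = 1) (hRdet : R.det = 1)
    (hRd : Rdᵀ * Rd = 1) (hRddet : Rd.det = 1)
    (Q : Matrix (Fin 3) (Fin 3) ℝ) (hQ : Q = Rdᵀ * R)
    (Ψ : ℝ) (hΨ : Ψ = Matrix.trace (1 - Q) / 2)
    (eR : EuclideanSpace ℝ (Fin 3))
    (heR : eR = (WithLp.equiv 2 (Fin 3 → ℝ)).symm
      ![(Q 2 1 - Q 1 2) / 2, (Q 0 2 - Q 2 0) / 2, (Q 1 0 - Q 0 1) / 2])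
    (ψ₁ : ℝ) (hψle : Ψ ≤ ψ₁) (hψlt : ψ₁ < 1)
    (V : ℝ)
    (hV : V = (1 / 2) * Kp * ‖ep‖ ^ 2 + (1 / 2) * m * ‖ev‖ ^ 2 + c₁ * ⟪ep, ev⟫
      + (1 / 2) * ⟪eΩ, Matrix.toEuclideanLin J eΩ⟫ + KR * Ψ + c₂ * ⟪eR, eΩ⟫) :
    (1 / 2) * (Kp * ‖ep‖ ^ 2 - 2 * c₁ * ‖ep‖ * ‖ev‖ + m * ‖ev‖ ^ 2)
        + (1 / 2) * (KR * ‖eR‖ ^ 2 - 2 * c₂ * ‖eR‖ * ‖eΩ‖ + lm * ‖eΩ‖ ^ 2)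
      ≤ V
    ∧ V ≤ (1 / 2) * (Kp * ‖ep‖ ^ 2 + 2 * c₁ * ‖ep‖ * ‖ev‖ + m * ‖ev‖ ^ 2)
        + (1 / 2) * ((2 * KR / (2 - ψ₁)) * ‖eR‖ ^ 2 + 2 * c₂ * ‖eR‖ * ‖eΩ‖
            + lM * ‖eΩ‖ ^ 2) := by
  have hQSO : Q ∈ Matrix.specialOrthogonalGroup (Fin 3) ℝ :=
    hQ ▸ Matrix.transpose_mul_mem_specialOrthogonalGroup
      ⟨(Matrix.mem_orthogonalGroup_iff' _ _).mpr hRd, hRddet⟩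
      ⟨(Matrix.mem_orthogonalGroup_iff' _ _).mpr hR, hRdet⟩
  obtain rfl : Ψ = Q.configError := hΨ
  obtain rfl : eR = Q.skewVee := heR
  have hΨlow := mul_le_mul_of_nonneg_left
    (Matrix.norm_skewVee_sq_le_two_mul_configError hQSO) hKR.le
  have hΨup := mul_le_mul_of_nonneg_left
    (Matrix.configError_le_norm_skewVee_sq_div hQSO hψle (by linarith)) hKR.le
  have hM₂₂ : 2 * KR / (2 - ψ₁) * ‖Q.skewVee‖ ^ 2
      = 2 * (KR * (‖Q.skewVee‖ ^ 2 / (2 - ψ₁))) := by ring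
  have hpv := abs_le.mp (abs_mul_real_inner_le hc₁ ep ev)
  have hRΩ := abs_le.mp (abs_mul_real_inner_le hc₂ Q.skewVee eΩ)
  obtain ⟨hJlow, hJup⟩ := hJ eΩ
  subst hV
  constructor <;> linarith

/-- equation (63) of the paper: the geometric-control Lyapunov
function `V` is sandwiched between the quadratic forms
`z₁ᵀM₁₁z₁ + z₂ᵀM₂₁z₂` and `z₁ᵀM₁₂z₁ + z₂ᵀM₂₂z₂`. -/
theorem lyapunov_sandwich
    (Kp m KR c₁ c₂ : ℝ) (hKp : 0 < Kp) (hm : 0 < m) (hKR : 0 < KR)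
    (hc₁ : 0 ≤ c₁) (hc₂ : 0 ≤ c₂)
    (ep ev eΩ : EuclideanSpace ℝ (Fin 3))
    (J : Matrix (Fin 3) (Fin 3) ℝ) (lm lM : ℝ)
    (hJ : ∀ w : EuclideanSpace ℝ (Fin 3),
      lm * ‖w‖ ^ 2 ≤ ⟪w, Matrix.toEuclideanLin J w⟫ ∧
      ⟪w, Matrix.toEuclideanLin J w⟫ ≤ lM * ‖w‖ ^ 2)
    (R Rd : Matrix (Fin 3) (Fin 3) ℝ)
    (hR : Rᵀ * R = 1) (hRdet : R.det = 1)
    (hRd : Rdᵀ * Rd = 1) (hRddet : Rd.det = 1)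
    (Q : Matrix (Fin 3) (Fin 3) ℝ) (hQ : Q = Rdᵀ * R)
    (Ψ : ℝ) (hΨ : Ψ = Matrix.trace (1 - Q) / 2)
    (eR : EuclideanSpace ℝ (Fin 3))
    (heR : eR = (WithLp.equiv 2 (Fin 3 → ℝ)).symm
      ![(Q 2 1 - Q 1 2) / 2, (Q 0 2 - Q 2 0) / 2, (Q 1 0 - Q 0 1) / 2])
    (ψ₁ : ℝ) (hψle : Ψ ≤ ψ₁) (hψlt : ψ₁ < 1)
    (V : ℝ)
    (hV : V = (1 / 2) * Kp * ‖ep‖ ^ 2 + (1 / 2) * m * ‖ev‖ ^ 2 + c₁ * ⟪ep, ev⟫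
      + (1 / 2) * ⟪eΩ, Matrix.toEuclideanLin J eΩ⟫ + KR * Ψ + c₂ * ⟪eR, eΩ⟫) :
    (1 / 2) * (Kp * ‖ep‖ ^ 2 - 2 * c₁ * ‖ep‖ * ‖ev‖ + m * ‖ev‖ ^ 2)
        + (1 / 2) * (KR * ‖eR‖ ^ 2 - 2 * c₂ * ‖eR‖ * ‖eΩ‖ + lm * ‖eΩ‖ ^ 2)
      ≤ V
    ∧ V ≤ (1 / 2) * (Kp * ‖ep‖ ^ 2 + 2 * c₁ * ‖ep‖ * ‖ev‖ + m * ‖ev‖ ^ 2)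
        + (1 / 2) * ((2 * KR / (2 - ψ₁)) * ‖eR‖ ^ 2 + 2 * c₂ * ‖eR‖ * ‖eΩ‖
            + lM * ‖eΩ‖ ^ 2) :=
  lyapunov_sandwich_general Kp m KR c₁ c₂ hKR hc₁ hc₂ ep ev eΩ J lm lM hJ R Rd hR hRdet hRd hRddet Q
    hQ Ψ hΨ eR heR ψ₁ hψle hψlt V hV
end

section
/- Let β, ω > 0 be real numbers with β ≠ ω. Let σ : [0,∞) → ℝⁿ be continuously differentiable with ‖σ(0)‖ ≤ Δ₀ and ‖σ′(t)‖ ≤ D for all t ≥ 0, and let P : [0,∞) → ℝⁿ be continuous with ‖P(t)‖ ≤ P̄ for all t ≥ 0. Define η(t) = ∫₀ᵗ ω e^{−ω(t−τ)} σ(τ) dτ. Then for all t ≥ 0, |∫₀ᵗ e^{−β(t−τ)} ⟨P(τ), σ(τ) − η(τ)⟩ dτ| ≤ P̄ ( Δ₀/|β − ω| + D/(β ω) ). -/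
open scoped RealInnerProductSpace

/-!
Integrating by parts, the high-pass residual is
`σ t - η t = e^{-ωt} σ 0 + ∫₀ᵗ e^{-ω(t-s)} σ' s ds`, so `‖σ τ - η τ‖ ≤ Δ₀ e^{-ωτ} + D/ω`.
By Cauchy–Schwarz the integrand is then at most `P̄ e^{-β(t-τ)} (Δ₀ e^{-ωτ} + D/ω)`, whose integral
`P̄ Δ₀ (e^{-ωt} - e^{-βt})/(β - ω) + P̄ D (1 - e^{-βt})/(βω)` is at most
`P̄ (Δ₀/|β - ω| + D/(βω))`.
-/

open MeasureTheory Set Real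

noncomputable def lowPass {E : Type*} [NormedAddCommGroup E] [NormedSpace ℝ E] [CompleteSpace E]
    (ω : ℝ) (σ : ℝ → E) (t : ℝ) : E :=
  ∫ τ in (0 : ℝ)..t, (ω * exp (-ω * (t - τ))) • σ τ

theorem integral_exp_conv {β ω : ℝ} (hβω : β ≠ ω) (t : ℝ) :
    ∫ τ in (0 : ℝ)..t, exp (-β * (t - τ)) * exp (-ω * τ)
      = (exp (-ω * t) - exp (-β * t)) / (β - ω) := by
  have hne : β - ω ≠ 0 := sub_ne_zero.mpr hβω
  have hexp : ∀ τ, exp (-β * (t - τ)) * exp (-ω * τ) = exp ((β - ω) * τ + -β * t) := by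
    intro τ
    rw [← exp_add]
    ring_nf
  simp_rw [hexp]
  rw [intervalIntegral.integral_comp_mul_add (fun x => exp x) hne, integral_exp, smul_eq_mul,
    inv_mul_eq_div]
  ring_nf

theorem integral_exp_conv_le {β ω t : ℝ} (hβ : 0 ≤ β) (hω : 0 ≤ ω) (hβω : β ≠ ω) (ht : 0 ≤ t) :
    ∫ τ in (0 : ℝ)..t, exp (-β * (t - τ)) * exp (-ω * τ) ≤ 1 / |β - ω| := by
  have hexp_mem : ∀ c, 0 ≤ c → 0 < exp (-c * t) ∧ exp (-c * t) ≤ 1 := fun c hc =>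
    ⟨exp_pos _, exp_le_one_iff.mpr (by nlinarith)⟩
  have hdiff : |exp (-ω * t) - exp (-β * t)| ≤ 1 := by
    obtain ⟨hω0, hω1⟩ := hexp_mem ω hω
    obtain ⟨hβ0, hβ1⟩ := hexp_mem β hβ
    rw [abs_le]
    constructor <;> linarith
  rw [integral_exp_conv hβω]
  calc (exp (-ω * t) - exp (-β * t)) / (β - ω)
      ≤ |exp (-ω * t) - exp (-β * t)| / |β - ω| := by rw [← abs_div]; exact le_abs_self _
    _ ≤ 1 / |β - ω| := by gcongr

theorem integral_exp_neg_mul_sub_le {c t : ℝ} (hc : 0 < c) (ht : 0 ≤ t) :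
    ∫ τ in (0 : ℝ)..t, exp (-c * (t - τ)) ≤ 1 / c := by
  simpa [abs_of_pos hc] using integral_exp_conv_le hc.le le_rfl hc.ne' ht

section LowPass

variable {E : Type*} [NormedAddCommGroup E] [NormedSpace ℝ E] [CompleteSpace E]

theorem sub_lowPass_eq (ω : ℝ) {σ σ' : ℝ → E} {t : ℝ}
    (hσ : ∀ τ ∈ uIcc 0 t, HasDerivAt σ (σ' τ) τ) (hσ' : IntervalIntegrable σ' volume 0 t) :
    σ t - lowPass ω σ t = exp (-ω * t) • σ 0 + ∫ τ in (0 : ℝ)..t, exp (-ω * (t - τ)) • σ' τ := by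
  have hkernel : ∀ τ, HasDerivAt (fun τ => exp (-ω * (t - τ))) (ω * exp (-ω * (t - τ))) τ := by
    intro τ
    convert (((hasDerivAt_id' τ).const_sub t).const_mul (-ω)).exp using 1
    ring
  rw [intervalIntegral.integral_smul_deriv_eq_deriv_smul (fun τ _ => hkernel τ) hσ
    (Continuous.intervalIntegrable (by fun_prop) _ _) hσ', lowPass]
  simp only [sub_self, sub_zero, mul_zero, exp_zero, one_smul]
  abel

theorem norm_sub_lowPass_le {ω Δ₀ D t : ℝ} (hω : 0 < ω) (ht : 0 ≤ t) {σ σ' : ℝ → E}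
    (hσ : ∀ τ ∈ Icc 0 t, HasDerivAt σ (σ' τ) τ) (hσ' : IntervalIntegrable σ' volume 0 t)
    (hσ0 : ‖σ 0‖ ≤ Δ₀) (hσ'D : ∀ τ ∈ Icc 0 t, ‖σ' τ‖ ≤ D) :
    ‖σ t - lowPass ω σ t‖ ≤ Δ₀ * exp (-ω * t) + D / ω := by
  have hD : 0 ≤ D := (norm_nonneg _).trans (hσ'D 0 ⟨le_rfl, ht⟩)
  have hforced : ‖∫ τ in (0 : ℝ)..t, exp (-ω * (t - τ)) • σ' τ‖ ≤ D / ω :=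
    calc ‖∫ τ in (0 : ℝ)..t, exp (-ω * (t - τ)) • σ' τ‖
        ≤ ∫ τ in (0 : ℝ)..t, exp (-ω * (t - τ)) * D := by
          refine intervalIntegral.norm_integral_le_of_norm_le ht (ae_of_all _ fun τ hτ => ?_)
            (Continuous.intervalIntegrable (by fun_prop) _ _)
          rw [norm_smul, norm_of_nonneg (exp_pos _).le]
          gcongr
          exact hσ'D τ (Ioc_subset_Icc_self hτ)
      _ ≤ 1 / ω * D := by
          rw [intervalIntegral.integral_mul_const]
          gcongr
          exact integral_exp_neg_mul_sub_le hω ht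
      _ = D / ω := by ring
  rw [sub_lowPass_eq ω (by rwa [uIcc_of_le ht]) hσ']
  calc ‖exp (-ω * t) • σ 0 + ∫ τ in (0 : ℝ)..t, exp (-ω * (t - τ)) • σ' τ‖
      ≤ exp (-ω * t) * ‖σ 0‖ + D / ω := by
        grw [norm_add_le, norm_smul, norm_of_nonneg (exp_pos _).le, hforced]
    _ ≤ Δ₀ * exp (-ω * t) + D / ω := by
        rw [mul_comm]
        gcongr

end LowPass

theorem integral_exp_decay_le {β ω A B t : ℝ} (hβ : 0 < β) (hω : 0 ≤ ω) (hβω : β ≠ ω)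
    (hA : 0 ≤ A) (hB : 0 ≤ B) (ht : 0 ≤ t) :
    ∫ τ in (0 : ℝ)..t, exp (-β * (t - τ)) * (A * exp (-ω * τ) + B) ≤ A / |β - ω| + B / β := by
  have hsplit : ∫ τ in (0 : ℝ)..t, exp (-β * (t - τ)) * (A * exp (-ω * τ) + B)
      = A * (∫ τ in (0 : ℝ)..t, exp (-β * (t - τ)) * exp (-ω * τ))
        + B * ∫ τ in (0 : ℝ)..t, exp (-β * (t - τ)) := by
    rw [← intervalIntegral.integral_const_mul, ← intervalIntegral.integral_const_mul,
      ← intervalIntegral.integral_add (Continuous.intervalIntegrable (by fun_prop) _ _)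
        (Continuous.intervalIntegrable (by fun_prop) _ _)]
    congr 1 with τ
    ring
  rw [hsplit]
  calc A * (∫ τ in (0 : ℝ)..t, exp (-β * (t - τ)) * exp (-ω * τ))
        + B * ∫ τ in (0 : ℝ)..t, exp (-β * (t - τ))
      ≤ A * (1 / |β - ω|) + B * (1 / β) := by
        gcongr
        · exact integral_exp_conv_le hβ.le hω hβω ht
        · exact integral_exp_neg_mul_sub_le hβ ht
    _ = A / |β - ω| + B / β := by ring

theorem phi4_bound_general {n : ℕ}
    (β ω : ℝ) (hβ : 0 < β) (hω : 0 < ω) (hβω : β ≠ ω)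
    (Δ₀ D Pbar : ℝ)
    (σ σ' : ℝ → EuclideanSpace ℝ (Fin n))
    (hσderiv : ∀ t ≥ (0 : ℝ), HasDerivAt σ (σ' t) t)
    (hσ'cont : ContinuousOn σ' (Set.Ici (0 : ℝ)))
    (hσ0 : ‖σ 0‖ ≤ Δ₀)
    (hσ'bound : ∀ t ≥ (0 : ℝ), ‖σ' t‖ ≤ D)
    (P : ℝ → EuclideanSpace ℝ (Fin n))
    (hPbound : ∀ t ≥ (0 : ℝ), ‖P t‖ ≤ Pbar)
    (η : ℝ → EuclideanSpace ℝ (Fin n))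
    (hη : ∀ t, η t = ∫ τ in (0 : ℝ)..t, (ω * Real.exp (-ω * (t - τ))) • σ τ) :
    ∀ t ≥ (0 : ℝ),
      |∫ τ in (0 : ℝ)..t, Real.exp (-β * (t - τ)) * ⟪P τ, σ τ - η τ⟫|
        ≤ Pbar * (Δ₀ / |β - ω| + D / (β * ω)) := by
  intro t ht
  have hP : 0 ≤ Pbar := (norm_nonneg _).trans (hPbound 0 le_rfl)
  have hΔ₀ : 0 ≤ Δ₀ := (norm_nonneg _).trans hσ0
  have hD : 0 ≤ D := (norm_nonneg _).trans (hσ'bound 0 le_rfl)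
  have hresidual : ∀ τ ∈ Icc 0 t, ‖σ τ - η τ‖ ≤ Δ₀ * exp (-ω * τ) + D / ω := by
    intro τ hτ
    rw [show η τ = lowPass ω σ τ from hη τ]
    exact norm_sub_lowPass_le hω hτ.1 (fun s hs => hσderiv s hs.1)
      ((hσ'cont.mono fun s hs => (uIcc_of_le hτ.1 ▸ hs).1).intervalIntegrable) hσ0
      (fun s hs => hσ'bound s hs.1)
  calc |∫ τ in (0 : ℝ)..t, exp (-β * (t - τ)) * ⟪P τ, σ τ - η τ⟫|
      ≤ ∫ τ in (0 : ℝ)..t, exp (-β * (t - τ)) * (Pbar * Δ₀ * exp (-ω * τ) + Pbar * (D / ω)) := by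
        rw [← norm_eq_abs]
        refine intervalIntegral.norm_integral_le_of_norm_le ht (ae_of_all _ fun τ hτ => ?_) ?_
        · rw [norm_mul, norm_of_nonneg (exp_pos _).le]
          gcongr
          calc ‖⟪P τ, σ τ - η τ⟫‖ ≤ ‖P τ‖ * ‖σ τ - η τ‖ := norm_inner_le_norm _ _
            _ ≤ Pbar * (Δ₀ * exp (-ω * τ) + D / ω) := by
              gcongr
              exacts [hPbound τ hτ.1.le, hresidual τ (Ioc_subset_Icc_self hτ)]
            _ = Pbar * Δ₀ * exp (-ω * τ) + Pbar * (D / ω) := by ring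
        · exact Continuous.intervalIntegrable (by fun_prop) _ _
    _ ≤ Pbar * Δ₀ / |β - ω| + Pbar * (D / ω) / β := by
        exact integral_exp_decay_le hβ hω.le hβω (by positivity) (by positivity) ht
    _ = Pbar * (Δ₀ / |β - ω| + D / (β * ω)) := by ring

/-- bound on the term Φ₄, equation (58) of the paper, with
`ζ₁(ω) = Δ₀/|β−ω| + D/(βω)`: the effect of the uncompensated in-band
uncertainty. Here `η` is the zero-initial-condition output of the first-order
low-pass filter `C(s) = ω/(s+ω)` applied to `σ`. -/
theorem phi4_bound {n : ℕ}
    (β ω : ℝ) (hβ : 0 < β) (hω : 0 < ω) (hβω : β ≠ ω)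
    (Δ₀ D Pbar : ℝ)
    (σ σ' : ℝ → EuclideanSpace ℝ (Fin n))
    (hσderiv : ∀ t ≥ (0 : ℝ), HasDerivAt σ (σ' t) t)
    (hσ'cont : ContinuousOn σ' (Set.Ici (0 : ℝ)))
    (hσ0 : ‖σ 0‖ ≤ Δ₀)
    (hσ'bound : ∀ t ≥ (0 : ℝ), ‖σ' t‖ ≤ D)
    (P : ℝ → EuclideanSpace ℝ (Fin n))
    (hPcont : ContinuousOn P (Set.Ici (0 : ℝ)))
    (hPbound : ∀ t ≥ (0 : ℝ), ‖P t‖ ≤ Pbar)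
    (η : ℝ → EuclideanSpace ℝ (Fin n))
    (hη : ∀ t, η t = ∫ τ in (0 : ℝ)..t, (ω * Real.exp (-ω * (t - τ))) • σ τ) :
    ∀ t ≥ (0 : ℝ),
      |∫ τ in (0 : ℝ)..t, Real.exp (-β * (t - τ)) * ⟪P τ, σ τ - η τ⟫|
        ≤ Pbar * (Δ₀ / |β - ω| + D / (β * ω)) :=
  phi4_bound_general β ω hβ hω hβω Δ₀ D Pbar σ σ' hσderiv hσ'cont hσ0 hσ'bound P hPbound η hη
end
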